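/- arXiv:2305.05772 — 2 statements merged into one kernel-verified Lean document; each statement's English description precedes it below -/
import Mathlib

section
/- The reset-to-mod integrate-and-fire map is a quasi-isometry with additive constant 2ϑ in the Alexiewicz norm: for all sequences a, a', ‖a - a'‖_A - 2ϑ ≤ ‖IF_ϑ(a) - IF_ϑ(a')‖_A ≤ ‖a - a'‖_A + 2ϑ. -/
/-- Rounding toward zero to the grid `ϑ·ℤ`: `ϑ · sgn(v) · ⌊|v|/ϑ⌋`. -/
noncomputable def qmod (ϑ v : ℝ) : ℝ :=
  Real.sign v * ((⌊|v| / ϑ⌋ : ℤ) : ℝ) * ϑ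

/-- Membrane potential `v_n` (before reset) of the discrete reset-to-mod
integrate-and-fire map: `u_0 = 0`, `v_n = u_{n-1} + a_n`, `u_n = v_n - qmod ϑ v_n`. -/
noncomputable def IFv (ϑ : ℝ) (a : ℕ → ℝ) : ℕ → ℝ
  | 0 => a 0
  | n + 1 => (IFv ϑ a n - qmod ϑ (IFv ϑ a n)) + a (n + 1)

/-- Output spike amplitudes of the reset-to-mod integrate-and-fire map. -/
noncomputable def IFb (ϑ : ℝ) (a : ℕ → ℝ) (n : ℕ) : ℝ := qmod ϑ (IFv ϑ a n)

/-- The discrete Alexiewicz norm of the first `N` entries of a sequence. -/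
noncomputable def Anorm (N : ℕ) (c : ℕ → ℝ) : ℝ :=
  ⨆ n : Fin N, |∑ i ∈ Finset.range (n.val + 1), c i|

lemma qmod_dist (ϑ : ℝ) (hϑ : 0 < ϑ) (v : ℝ) : |v - qmod ϑ v| < ϑ := by
  have hne : ϑ ≠ 0 := hϑ.ne'
  rcases lt_trichotomy v 0 with hv | hv | hv
  · have hs : Real.sign v = -1 := Real.sign_of_neg hv
    have habs : |v| = -v := abs_of_neg hv
    have h1 : v - qmod ϑ v = -(ϑ * Int.fract (-v / ϑ)) := by
      simp only [qmod, hs, habs, Int.fract]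
      field_simp
      ring
    rw [h1, abs_neg, abs_of_nonneg (mul_nonneg hϑ.le (Int.fract_nonneg _))]
    calc ϑ * Int.fract (-v / ϑ) < ϑ * 1 :=
          mul_lt_mul_of_pos_left (Int.fract_lt_one _) hϑ
      _ = ϑ := mul_one ϑ
  · simp [hv, qmod, hϑ]
  · have hs : Real.sign v = 1 := Real.sign_of_pos hv
    have habs : |v| = v := abs_of_pos hv
    have h1 : v - qmod ϑ v = ϑ * Int.fract (v / ϑ) := by
      simp only [qmod, hs, habs, Int.fract]
      field_simp
    rw [h1, abs_of_nonneg (mul_nonneg hϑ.le (Int.fract_nonneg _))]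
    calc ϑ * Int.fract (v / ϑ) < ϑ * 1 :=
          mul_lt_mul_of_pos_left (Int.fract_lt_one _) hϑ
      _ = ϑ := mul_one ϑ

lemma IFb_sum (ϑ : ℝ) (a : ℕ → ℝ) (n : ℕ) :
    ∑ i ∈ Finset.range (n + 1), IFb ϑ a i
      = ∑ i ∈ Finset.range (n + 1), a i - (IFv ϑ a n - qmod ϑ (IFv ϑ a n)) := by
  induction n with
  | zero => simp [IFb, IFv]
  | succ n ih =>
    rw [Finset.sum_range_succ, ih, Finset.sum_range_succ a (n + 1)]
    simp only [IFb, IFv]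
    ring

lemma IFb_sum_close (ϑ : ℝ) (hϑ : 0 < ϑ) (a : ℕ → ℝ) (n : ℕ) :
    |∑ i ∈ Finset.range (n + 1), IFb ϑ a i - ∑ i ∈ Finset.range (n + 1), a i| < ϑ := by
  rw [IFb_sum]
  rw [sub_sub_cancel_left, abs_neg]
  exact qmod_dist ϑ hϑ _

/-- reset-to-mod integrate-and-fire is a quasi isometry with
additive constant `2ϑ` in the Alexiewicz norm. -/
theorem IF_quasiIsometry (ϑ : ℝ) (hϑ : 0 < ϑ) (N : ℕ) (a a' : ℕ → ℝ) :
    Anorm N (fun n => a n - a' n) - 2 * ϑ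
      ≤ Anorm N (fun n => IFb ϑ a n - IFb ϑ a' n) ∧
    Anorm N (fun n => IFb ϑ a n - IFb ϑ a' n)
      ≤ Anorm N (fun n => a n - a' n) + 2 * ϑ := by
  rcases Nat.eq_zero_or_pos N with rfl | hN
  · have h0 : ∀ c : ℕ → ℝ, Anorm 0 c = 0 := by
      intro c; simp [Anorm, Real.iSup_of_isEmpty]
    constructor <;> simp [h0] <;> linarith
  · haveI : Nonempty (Fin N) := ⟨⟨0, hN⟩⟩
    have hbdd : ∀ c : ℕ → ℝ, BddAbove (Set.range
        fun n : Fin N => |∑ i ∈ Finset.range (n.val + 1), c i|) :=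
      fun c => (Set.finite_range _).bddAbove
    have key : ∀ n : ℕ,
        |∑ i ∈ Finset.range (n + 1), (a i - a' i)
          - ∑ i ∈ Finset.range (n + 1), (IFb ϑ a i - IFb ϑ a' i)| < 2 * ϑ := by
      intro n
      have h1 := IFb_sum_close ϑ hϑ a n
      have h2 := IFb_sum_close ϑ hϑ a' n
      rw [Finset.sum_sub_distrib, Finset.sum_sub_distrib]
      calc |(∑ i ∈ Finset.range (n + 1), a i - ∑ i ∈ Finset.range (n + 1), a' i)
            - (∑ i ∈ Finset.range (n + 1), IFb ϑ a i
              - ∑ i ∈ Finset.range (n + 1), IFb ϑ a' i)|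
          ≤ |∑ i ∈ Finset.range (n + 1), IFb ϑ a i - ∑ i ∈ Finset.range (n + 1), a i|
            + |∑ i ∈ Finset.range (n + 1), IFb ϑ a' i - ∑ i ∈ Finset.range (n + 1), a' i| := by
            rw [abs_sub_comm]
            apply (abs_sub _ _).trans_eq' ?_ |>.trans_eq rfl
            congr 1
            ring
        _ < ϑ + ϑ := add_lt_add h1 h2
        _ = 2 * ϑ := by ring
    constructor
    · rw [sub_le_iff_le_add]
      apply ciSup_le
      intro n
      have := key n.val
      have h3 : |∑ i ∈ Finset.range (n.val + 1), (a i - a' i)|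
          ≤ |∑ i ∈ Finset.range (n.val + 1), (IFb ϑ a i - IFb ϑ a' i)| + 2 * ϑ := by
        have := abs_sub_abs_le_abs_sub (∑ i ∈ Finset.range (n.val + 1), (a i - a' i))
          (∑ i ∈ Finset.range (n.val + 1), (IFb ϑ a i - IFb ϑ a' i))
        linarith [key n.val]
      refine h3.trans (add_le_add_left ?_ _)
      exact le_ciSup (hbdd _) n
    · apply ciSup_le
      intro n
      have h3 : |∑ i ∈ Finset.range (n.val + 1), (IFb ϑ a i - IFb ϑ a' i)|
          ≤ |∑ i ∈ Finset.range (n.val + 1), (a i - a' i)| + 2 * ϑ := by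
        have := abs_sub_abs_le_abs_sub
          (∑ i ∈ Finset.range (n.val + 1), (IFb ϑ a i - IFb ϑ a' i))
          (∑ i ∈ Finset.range (n.val + 1), (a i - a' i))
        rw [abs_sub_comm] at this
        linarith [key n.val]
      refine h3.trans (add_le_add_left ?_ _)
      exact le_ciSup (hbdd _) n
end

section
/- Every sequence a ∈ ℝ^N admits a decomposition a = ψ + ρ where ψ = IF_ϑ(a) has all entries integer multiples of ϑ and the residuum ρ satisfies ‖ρ‖_A < ϑ. -/
lemma qmod_sub_lt (ϑ v : ℝ) (hϑ : 0 < ϑ) : |v - qmod ϑ v| < ϑ := by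
  rcases lt_trichotomy v 0 with hv | hv | hv
  · rw [qmod, Real.sign_of_neg hv, abs_of_neg hv]
    have h1 : ⌊-v / ϑ⌋ ≤ -v / ϑ := Int.floor_le _
    have h2 : -v / ϑ < ⌊-v / ϑ⌋ + 1 := Int.lt_floor_add_one _
    rw [abs_lt]
    constructor
    · nlinarith [(le_div_iff₀ hϑ).mp h1, (div_lt_iff₀ hϑ).mp h2]
    · nlinarith [(le_div_iff₀ hϑ).mp h1, (div_lt_iff₀ hϑ).mp h2]
  · simp [qmod, hv, hϑ]
  · rw [qmod, Real.sign_of_pos hv, abs_of_pos hv]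
    have h1 : ⌊v / ϑ⌋ ≤ v / ϑ := Int.floor_le _
    have h2 : v / ϑ < ⌊v / ϑ⌋ + 1 := Int.lt_floor_add_one _
    rw [abs_lt]
    constructor
    · nlinarith [(le_div_iff₀ hϑ).mp h1, (div_lt_iff₀ hϑ).mp h2]
    · nlinarith [(le_div_iff₀ hϑ).mp h1, (div_lt_iff₀ hϑ).mp h2]

lemma qmod_int (ϑ v : ℝ) : ∃ k : ℤ, qmod ϑ v = (k : ℝ) * ϑ := by
  rcases lt_trichotomy v 0 with hv | hv | hv
  · exact ⟨-⌊|v| / ϑ⌋, by rw [qmod, Real.sign_of_neg hv]; push_cast; ring⟩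
  · exact ⟨0, by simp [qmod, hv]⟩
  · exact ⟨⌊|v| / ϑ⌋, by rw [qmod, Real.sign_of_pos hv]; ring⟩

/-- spike train decomposition `a = ψ + ρ` with `ψ = IF_ϑ(a)` having
amplitudes in `ϑ·ℤ` and residuum `ρ` with all partial sums `< ϑ` in absolute
value (`‖ρ‖_A < ϑ`). -/
theorem IF_decomposition (ϑ : ℝ) (hϑ : 0 < ϑ) (a : ℕ → ℝ) :
    ∃ ρ : ℕ → ℝ,
      (∀ n : ℕ, a n = IFb ϑ a n + ρ n) ∧
      (∀ n : ℕ, ∃ k : ℤ, IFb ϑ a n = (k : ℝ) * ϑ) ∧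
      (∀ n : ℕ, |∑ i ∈ Finset.range n, ρ i| < ϑ) := by
  refine ⟨fun n => a n - IFb ϑ a n, fun n => by ring, fun n => qmod_int ϑ _, ?_⟩
  have key : ∀ n : ℕ, ∑ i ∈ Finset.range (n + 1), (a i - IFb ϑ a i)
      = IFv ϑ a n - qmod ϑ (IFv ϑ a n) := by
    intro n
    induction n with
    | zero => simp [IFv, IFb]
    | succ m ih =>
      rw [Finset.sum_range_succ, ih]
      simp only [IFb, IFv]
      ring
  intro n
  cases n with
  | zero => simpa using hϑ
  | succ m => rw [key m]; exact qmod_sub_lt ϑ _ hϑ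
end
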